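/- arXiv:1603.09539 — 3 statements merged into one kernel-verified Lean document; each statement's English description precedes it below -/
import Mathlib

section
/- Under the h-exponential change *L = L e^τ with τ = β/L and β = b_i y^i for an h-vector b_i with scalar ρ, the second y-derivatives satisfy *L_{ij} = e^τ (1 + ρ − τ) L_{ij} + (e^τ/L) m_i m_j, where L_{ij} = ∂²L/∂y^i∂y^j and m_i = b_i − τ l_i. -/
noncomputable def pd {n : ℕ} (f : (Fin n → ℝ) → ℝ) (i : Fin n) (y : Fin n → ℝ) : ℝ :=
  fderiv ℝ f y (Pi.single i 1)

noncomputable def pd2 {n : ℕ} (f : (Fin n → ℝ) → ℝ) (i j : Fin n) (y : Fin n → ℝ) : ℝ :=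
  pd (fun z => pd f j z) i y

section helpers

variable {n : ℕ} {f g : (Fin n → ℝ) → ℝ} {i : Fin n} {y : Fin n → ℝ}

lemma pd_mul (hf : DifferentiableAt ℝ f y) (hg : DifferentiableAt ℝ g y) :
    pd (fun z => f z * g z) i y = pd f i y * g y + f y * pd g i y := by
  simp only [pd, fderiv_fun_mul hf hg, ContinuousLinearMap.add_apply,
    ContinuousLinearMap.smul_apply, smul_eq_mul]
  ring

lemma pd_add (hf : DifferentiableAt ℝ f y) (hg : DifferentiableAt ℝ g y) :
    pd (fun z => f z + g z) i y = pd f i y + pd g i y := by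
  simp only [pd, fderiv_fun_add hf hg, ContinuousLinearMap.add_apply]

lemma pd_sub (hf : DifferentiableAt ℝ f y) (hg : DifferentiableAt ℝ g y) :
    pd (fun z => f z - g z) i y = pd f i y - pd g i y := by
  simp only [pd, fderiv_fun_sub hf hg, ContinuousLinearMap.sub_apply]

lemma pd_const (c : ℝ) : pd (fun _ : Fin n → ℝ => c) i y = 0 := by
  simp [pd]

lemma pd_exp (hf : DifferentiableAt ℝ f y) :
    pd (fun z => Real.exp (f z)) i y = Real.exp (f y) * pd f i y := by
  rw [pd, (hf.hasFDerivAt.exp).fderiv]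
  simp [pd]

lemma contDiff_pd (hf : ContDiff ℝ (⊤ : ℕ∞) f) (j : Fin n) :
    ContDiff ℝ (⊤ : ℕ∞) (fun z => pd f j z) :=
  (hf.fderiv_right (by simp)).clm_apply contDiff_const

lemma pd2_symm (hf : ContDiff ℝ (⊤ : ℕ∞) f) (i j : Fin n) (y : Fin n → ℝ) :
    pd2 f i j y = pd2 f j i y := by
  have hd : DifferentiableAt ℝ (fderiv ℝ f) y :=
    ((hf.fderiv_right (m := (⊤ : ℕ∞)) (by simp)).differentiable (by simp)).differentiableAt
  have key : ∀ v w : Fin n → ℝ,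
      fderiv ℝ (fun z => fderiv ℝ f z v) y w = fderiv ℝ (fderiv ℝ f) y w v := by
    intro v w
    rw [fderiv_clm_apply hd (differentiableAt_const v)]
    simp
  have hsymm : IsSymmSndFDerivAt ℝ f y :=
    (hf.contDiffAt (x := y)).isSymmSndFDerivAt (by rw [minSmoothness_of_isRCLikeNormedField]; exact WithTop.coe_le_coe.mpr (le_top : (2 : ℕ∞) ≤ ⊤))
  simp only [pd2, pd]
  rw [key, key]
  exact hsymm _ _

end helpers

/-- For the h-exponential change `*L = L e^τ` (`τ = β/L`, `β = b_i y^i`,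
`b_i` an h-vector with scalar ρ, so that `L ∂b_i/∂y^j = ρ h_{ij}` with `h_{ij} = L L_{ij}`),
the second y-derivatives satisfy `*L_{ij} = e^τ (1+ρ−τ) L_{ij} + (e^τ/L) m_i m_j`,
where `m_i = b_i − τ l_i`. -/
theorem stmt_2 {n : ℕ} (L : (Fin n → ℝ) → ℝ) (b : Fin n → (Fin n → ℝ) → ℝ) (ρ : ℝ)
    (hL : ContDiff ℝ (⊤ : ℕ∞) L) (hb : ∀ i, ContDiff ℝ (⊤ : ℕ∞) (b i)) (hL0 : ∀ z, L z ≠ 0)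
    (β : (Fin n → ℝ) → ℝ) (hβ : ∀ z, β z = ∑ i, b i z * z i)
    (hdβ : ∀ z i, pd β i z = b i z)
    (hvec : ∀ z i j, L z * pd (b i) j z = ρ * (L z * pd2 L i j z))
    (y : Fin n → ℝ) (τ : ℝ) (hτ : τ = β y / L y)
    (m : Fin n → ℝ) (hm : ∀ i, m i = b i y - τ * pd L i y) :
    ∀ i j, pd2 (fun z => L z * Real.exp (β z / L z)) i j y
      = Real.exp τ * (1 + ρ - τ) * pd2 L i j y + (Real.exp τ / L y) * m i * m j := by
  intro i j
  set T : (Fin n → ℝ) → ℝ := fun z => β z / L z with hTdef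
  have hβC : ContDiff ℝ (⊤ : ℕ∞) β := by
    have hβe : β = fun z => ∑ k, b k z * z k := funext hβ
    rw [hβe]
    exact ContDiff.sum fun k _ => (hb k).mul (contDiff_apply ℝ ℝ k)
  have hTC : ContDiff ℝ (⊤ : ℕ∞) T := hβC.div hL hL0
  have hLd : ∀ z, DifferentiableAt ℝ L z := fun z => (hL.differentiable (by simp)) z
  have hTd : ∀ z, DifferentiableAt ℝ T z := fun z => (hTC.differentiable (by simp)) z
  have hbd : ∀ k z, DifferentiableAt ℝ (b k) z := fun k z => ((hb k).differentiable (by simp)) z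
  have hpdLC : ∀ k, ContDiff ℝ (⊤ : ℕ∞) (fun z => pd L k z) := fun k => contDiff_pd hL k
  have hpdLd : ∀ k z, DifferentiableAt ℝ (fun z => pd L k z) z :=
    fun k z => ((hpdLC k).differentiable (by simp)) z
  -- derivative of T
  have pdT : ∀ z k, pd T k z = (b k z - T z * pd L k z) / L z := by
    intro z k
    have hβeq : β = fun w => T w * L w := by
      funext w
      simp [hTdef, div_mul_cancel₀ _ (hL0 w)]
    have h1 : pd β k z = pd T k z * L z + T z * pd L k z := by
      conv_lhs => rw [hβeq]
      exact pd_mul (hTd z) (hLd z)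
    rw [hdβ z k] at h1
    rw [eq_div_iff (hL0 z)]
    linarith
  -- first derivative of the new metric
  have eq1 : ∀ z k, pd (fun w => L w * Real.exp (β w / L w)) k z
      = Real.exp (T z) * (b k z + (1 - T z) * pd L k z) := by
    intro z k
    have : pd (fun w => L w * Real.exp (β w / L w)) k z
        = pd L k z * Real.exp (T z) + L z * (Real.exp (T z) * pd T k z) := by
      rw [show (fun w => L w * Real.exp (β w / L w)) = fun w => L w * Real.exp (T w) from rfl,
        pd_mul (hLd z) ((hTd z).exp), pd_exp (hTd z)]
    have hc : L z * ((b k z - T z * pd L k z) / L z) = b k z - T z * pd L k z := by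
      rw [mul_comm]
      exact div_mul_cancel₀ _ (hL0 z)
    rw [this, pdT z k, mul_left_comm, hc]
    ring
  -- second derivative
  have hTy : T y = τ := by rw [hτ]
  have hpdTy : ∀ k, pd T k y = m k / L y := by
    intro k
    rw [pdT y k, hTy, ← hm k]
  have hbji : pd (b j) i y = ρ * pd2 L i j y := by
    have h := hvec y j i
    have h2 : L y * pd (b j) i y = L y * (ρ * pd2 L j i y) := by linarith
    have h3 := mul_left_cancel₀ (hL0 y) h2
    rw [h3, pd2_symm hL j i y]
  have step : pd2 (fun z => L z * Real.exp (β z / L z)) i j y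
      = pd (fun z => Real.exp (T z) * (b j z + (1 - T z) * pd L j z)) i y := by
    simp only [pd2]
    rw [show (fun z => pd (fun w => L w * Real.exp (β w / L w)) j z)
        = fun z => Real.exp (T z) * (b j z + (1 - T z) * pd L j z) from
        funext fun z => eq1 z j]
  have hBd : DifferentiableAt ℝ (fun z => b j z + (1 - T z) * pd L j z) y :=
    (hbd j y).add ((((differentiableAt_const (1:ℝ)).sub (hTd y))).mul (hpdLd j y))
  have expand : pd (fun z => Real.exp (T z) * (b j z + (1 - T z) * pd L j z)) i y
      = Real.exp (T y) * pd T i y * (b j y + (1 - T y) * pd L j y)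
        + Real.exp (T y) * (pd (b j) i y + (0 - pd T i y) * pd L j y
            + (1 - T y) * pd2 L i j y) := by
    rw [pd_mul ((hTd y).exp) hBd, pd_exp (hTd y),
      pd_add (g := fun z => (1 - T z) * pd L j z) (hbd j y) ((((differentiableAt_const (1:ℝ)).sub (hTd y))).mul (hpdLd j y)),
      pd_mul (f := fun z => 1 - T z) (((differentiableAt_const (1:ℝ)).sub (hTd y))) (hpdLd j y),
      pd_sub (differentiableAt_const (1:ℝ)) (hTd y), pd_const]
    simp only [pd2]
    ring
  rw [step, expand, hTy, hpdTy i, hbji, hm i, hm j]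
  have hLy := hL0 y
  field_simp
  ring
end

section
/- With *g_{ij} as in the h-exponential change and N^j the unit normal of F^{n−1} (satisfying l_i N^i = 0, g_{ij} B^i_α N^j = 0), one has *g_{ij} B^i_α N^j = (b_j N^j) e^{2τ} { (1−2τ) l_i B^i_α + 2 b_i B^i_α }. Consequently, N^j is normal to the hypersurface with respect to *g if and only if b_j N^j = 0, since e^{2τ}{(1−2τ) l_i B^i_α + 2 b_i B^i_α} cannot vanish identically (its transvection by v^α would force L = 0). -/
/-! The rank-one terms `l ⊗ l`, `b ⊗ l + l ⊗ b`, `b ⊗ b` of `*g` split into products of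
contractions, and `g(B_α, N) = 0`, `l(N) = 0` kill everything except `b(N)` times the
covector `e^{2τ}((1 - 2τ) l + 2 b)` on `B_α`. Contracting that covector with `v` gives
`e^{2τ}((1 - 2τ) L + 2β) = e^{2τ} L ≠ 0`, so it does not vanish on all `B_α`. -/

section BilinearForms

variable {ι R : Type*} [Fintype ι] [CommSemiring R]

theorem sum_sum_mul_mul_mul_mul (a c x y : ι → R) :
    ∑ i, ∑ j, a i * c j * x i * y j = (∑ i, a i * x i) * ∑ j, c j * y j := by
  rw [Finset.sum_mul_sum]
  exact Finset.sum_congr rfl fun i _ => Finset.sum_congr rfl fun j _ => by ring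

theorem sum_sum_eq_of_eq_add_rankOne (M g : ι → ι → R) (l b x y : ι → R) (c₁ c₂ c₃ c₄ : R)
    (hM : ∀ i j, M i j = c₁ * g i j + c₂ * l i * l j
        + c₃ * (b i * l j + b j * l i) + c₄ * b i * b j) :
    ∑ i, ∑ j, M i j * x i * y j
      = c₁ * (∑ i, ∑ j, g i j * x i * y j)
        + c₂ * ((∑ i, l i * x i) * ∑ j, l j * y j)
        + c₃ * ((∑ i, b i * x i) * (∑ j, l j * y j) + (∑ i, l i * x i) * ∑ j, b j * y j)
        + c₄ * ((∑ i, b i * x i) * ∑ j, b j * y j) := by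
  have hexpand : ∀ i j, M i j * x i * y j
      = c₁ * (g i j * x i * y j) + c₂ * (l i * l j * x i * y j)
        + c₃ * (b i * l j * x i * y j + l i * b j * x i * y j)
        + c₄ * (b i * b j * x i * y j) := fun i j => by rw [hM]; ring
  simp only [hexpand, Finset.sum_add_distrib, ← Finset.mul_sum, sum_sum_mul_mul_mul_mul]

end BilinearForms

theorem eq_zero_of_forall_mul_eq_zero_of_sum_mul_ne_zero {ι R : Type*} [Fintype ι]
    [Semiring R] [NoZeroDivisors R] {c : R} {w v : ι → R} (hwv : ∑ α, w α * v α ≠ 0)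
    (h : ∀ α, c * w α = 0) : c = 0 := by
  by_contra hc
  exact hwv (Finset.sum_eq_zero fun α _ => by
    rw [(mul_eq_zero.mp (h α)).resolve_left hc, zero_mul])

theorem stmt_10_general {n p : ℕ} (g sg : Fin n → Fin n → ℝ)
    (l b N : Fin n → ℝ) (B : Fin n → Fin p → ℝ) (v : Fin p → ℝ)
    (L βv τ ρ ν : ℝ) (hL0 : L ≠ 0) (hτ : τ = βv / L)
    (hsg : ∀ i j, sg i j = ν * Real.exp (2*τ) * g i j
        + Real.exp (2*τ) * (2*τ^2 - τ - ρ) * l i * l j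
        + Real.exp (2*τ) * (1 - 2*τ) * (b i * l j + b j * l i)
        + 2 * Real.exp (2*τ) * b i * b j)
    (hlN : ∑ i, l i * N i = 0)
    (hgBN : ∀ α, ∑ i, ∑ j, g i j * B i α * N j = 0)
    (hlBv : ∑ α, (∑ i, l i * B i α) * v α = L)
    (hbBv : ∑ α, (∑ i, b i * B i α) * v α = βv) :
    (∀ α, ∑ i, ∑ j, sg i j * B i α * N j
        = (∑ j, b j * N j) * Real.exp (2*τ)
          * ((1 - 2*τ) * (∑ i, l i * B i α) + 2 * (∑ i, b i * B i α)))
    ∧ ((∀ α, ∑ i, ∑ j, sg i j * B i α * N j = 0) ↔ (∑ j, b j * N j) = 0) := by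
  have hnormal : ∀ α, ∑ i, ∑ j, sg i j * B i α * N j
      = (∑ j, b j * N j) * Real.exp (2*τ)
        * ((1 - 2*τ) * (∑ i, l i * B i α) + 2 * (∑ i, b i * B i α)) := fun α => by
    rw [sum_sum_eq_of_eq_add_rankOne sg g l b _ N _ _ _ _ hsg, hgBN α, hlN]
    ring
  have htransvect :
      ∑ α, ((1 - 2*τ) * (∑ i, l i * B i α) + 2 * (∑ i, b i * B i α)) * v α = L := by
    simp only [add_mul, mul_assoc, Finset.sum_add_distrib, ← Finset.mul_sum, hlBv, hbBv]
    rw [hτ]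
    field_simp
    ring
  refine ⟨hnormal, fun h => ?_, fun h α => by rw [hnormal, h]; ring⟩
  have hprod : (∑ j, b j * N j) * Real.exp (2*τ) = 0 :=
    eq_zero_of_forall_mul_eq_zero_of_sum_mul_ne_zero (htransvect ▸ hL0)
      fun α => (hnormal α).symm.trans (h α)
  exact (mul_eq_zero.mp hprod).resolve_right (Real.exp_ne_zero _)

/-- With `*g_{ij}` of the h-exponential change and `N^j` the unit normal of
`F^{n−1}` in `F^n` (`l_iN^i = 0`, `g_{ij}B^i_αN^j = 0`), one has
`*g_{ij}B^i_αN^j = (b_jN^j) e^{2τ} {(1−2τ) l_iB^i_α + 2 b_iB^i_α}`; consequently `N^j`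
is normal to the hypersurface with respect to `*g` iff `b_jN^j = 0` (using
`l_iB^i_α v^α = L ≠ 0`, `b_iB^i_α v^α = β`, `τ = β/L`). -/
theorem stmt_10 {n p : ℕ} (g sg : Fin n → Fin n → ℝ)
    (l b N : Fin n → ℝ) (B : Fin n → Fin p → ℝ) (v : Fin p → ℝ)
    (L βv τ ρ ν : ℝ) (hL0 : L ≠ 0) (hτ : τ = βv / L) (hν : ν = 1 + ρ - τ)
    (hsg : ∀ i j, sg i j = ν * Real.exp (2*τ) * g i j
        + Real.exp (2*τ) * (2*τ^2 - τ - ρ) * l i * l j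
        + Real.exp (2*τ) * (1 - 2*τ) * (b i * l j + b j * l i)
        + 2 * Real.exp (2*τ) * b i * b j)
    (hlN : ∑ i, l i * N i = 0)
    (hgBN : ∀ α, ∑ i, ∑ j, g i j * B i α * N j = 0)
    (hNN : ∑ i, ∑ j, g i j * N i * N j = 1)
    (hlBv : ∑ α, (∑ i, l i * B i α) * v α = L)
    (hbBv : ∑ α, (∑ i, b i * B i α) * v α = βv) :
    (∀ α, ∑ i, ∑ j, sg i j * B i α * N j
        = (∑ j, b j * N j) * Real.exp (2*τ)
          * ((1 - 2*τ) * (∑ i, l i * B i α) + 2 * (∑ i, b i * B i α)))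
    ∧ ((∀ α, ∑ i, ∑ j, sg i j * B i α * N j = 0) ↔ (∑ j, b j * N j) = 0) :=
  stmt_10_general g sg l b N B v L βv τ ρ ν hL0 hτ hsg hlN hgBN hlBv hbBv
end

section
/- Under the h-exponential change, the second fundamental v-tensors of the hypersurfaces are related by *M_{αβ} = √ν · e^τ · M_{αβ}, where M_{αβ} = C_{ijk}B^i_α B^j_β N^k and *M_{αβ} = *C_{ijk}B^i_α B^j_β *N^k, assuming b_jN^j = 0. -/
/-!
Both `M_{αβ}` and `*M_{αβ}` are full contractions of a 3-tensor with `B_α`, `B_β` and a normal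
vector. Contract `*C` with `N` first: since `m_k N^k = 0`, the cubic term `m_i m_j m_k` and the
term `m_k h_{ij}` vanish, and since `h_{kj} B^j_γ N^k = 0` so do `m_i h_{kj}` and `m_j h_{ki}`.
Only `ν e^{2τ} M_{αβ}` survives, and `*N = N / (e^τ √ν)` turns it into `√ν e^τ M_{αβ}`.
-/

open Finset Matrix

section Contract3

variable {ι R : Type*} [Fintype ι] [CommRing R]

def contract3 (T : ι → ι → ι → R) (u v w : ι → R) : R :=
  ∑ i, ∑ j, ∑ k, T i j k * u i * v j * w k

theorem contract3_add (S T : ι → ι → ι → R) (u v w : ι → R) :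
    contract3 (S + T) u v w = contract3 S u v w + contract3 T u v w := by
  simp only [contract3, Pi.add_apply, add_mul, sum_add_distrib]

theorem contract3_smul (c : R) (T : ι → ι → ι → R) (u v w : ι → R) :
    contract3 (c • T) u v w = c * contract3 T u v w := by
  simp only [contract3, Pi.smul_apply, smul_eq_mul, mul_sum, mul_assoc]

theorem contract3_smul_right (T : ι → ι → ι → R) (u v w : ι → R) (c : R) :
    contract3 T u v (c • w) = c * contract3 T u v w := by
  simp only [contract3, Pi.smul_apply, smul_eq_mul, mul_sum]
  refine sum_congr rfl fun i _ => sum_congr rfl fun j _ => sum_congr rfl fun k _ => ?_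
  ring

theorem contract3_tensor (x y z u v w : ι → R) :
    contract3 (fun i j k => x i * y j * z k) u v w = (x ⬝ᵥ u) * (y ⬝ᵥ v) * (z ⬝ᵥ w) := by
  rw [dotProduct, dotProduct, dotProduct, sum_mul_sum, sum_mul]
  simp only [sum_mul, mul_sum]
  refine sum_congr rfl fun i _ => ?_
  rw [sum_comm]
  refine sum_congr rfl fun k _ => sum_congr rfl fun j _ => ?_
  ring

theorem dotProduct_mulVec_eq_sum (H : Matrix ι ι R) (v w : ι → R) :
    w ⬝ᵥ H *ᵥ v = ∑ k, ∑ j, H k j * v j * w k := by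
  simp only [dotProduct, mulVec, mul_sum]
  refine sum_congr rfl fun k _ => sum_congr rfl fun j _ => ?_
  ring

theorem contract3_mul_first (x u v w : ι → R) (H : Matrix ι ι R) :
    contract3 (fun i j k => x i * H k j) u v w = (x ⬝ᵥ u) * (w ⬝ᵥ H *ᵥ v) := by
  rw [dotProduct_mulVec_eq_sum, dotProduct, sum_mul_sum]
  simp only [mul_sum]
  refine sum_congr rfl fun i _ => ?_
  rw [sum_comm]
  refine sum_congr rfl fun k _ => sum_congr rfl fun j _ => ?_
  ring

theorem contract3_mul_second (x u v w : ι → R) (H : Matrix ι ι R) :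
    contract3 (fun i j k => x j * H k i) u v w = (x ⬝ᵥ v) * (w ⬝ᵥ H *ᵥ u) := by
  rw [dotProduct_mulVec_eq_sum, dotProduct, sum_mul_sum, contract3, sum_comm]
  simp only [mul_sum]
  refine sum_congr rfl fun j _ => ?_
  rw [sum_comm]
  refine sum_congr rfl fun k _ => sum_congr rfl fun i _ => ?_
  ring

theorem contract3_mul_third (x u v w : ι → R) (H : Matrix ι ι R) :
    contract3 (fun i j k => x k * H i j) u v w = (x ⬝ᵥ w) * (u ⬝ᵥ H *ᵥ v) := by
  rw [dotProduct_mulVec_eq_sum, dotProduct, sum_mul_sum, contract3]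
  conv_lhs => enter [2, i]; rw [sum_comm]
  rw [sum_comm]
  simp only [mul_sum]
  refine sum_congr rfl fun k _ => sum_congr rfl fun i _ => sum_congr rfl fun j _ => ?_
  ring

theorem contract3_eq_of_dotProduct_eq_zero (C T : ι → ι → ι → R) (H : Matrix ι ι R)
    (x u v w : ι → R) (a c d : R)
    (hT : ∀ i j k, T i j k = a * C i j k + c * (x i * x j * x k)
      + d * (x i * H k j + x j * H k i + x k * H i j))
    (hxw : x ⬝ᵥ w = 0) (hu : w ⬝ᵥ H *ᵥ u = 0) (hv : w ⬝ᵥ H *ᵥ v = 0) :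
    contract3 T u v w = a * contract3 C u v w := by
  have hT' : T = a • C + c • (fun i j k => x i * x j * x k)
      + d • ((fun i j k => x i * H k j) + (fun i j k => x j * H k i)
        + (fun i j k => x k * H i j)) := by
    funext i j k
    simp only [hT, Pi.add_apply, Pi.smul_apply, smul_eq_mul]
  rw [hT']
  simp only [contract3_add, contract3_smul, contract3_tensor, contract3_mul_first,
    contract3_mul_second, contract3_mul_third, hxw, hu, hv]
  ring

end Contract3

theorem stmt_14_general {n p : ℕ}
    (C sC : Fin n → Fin n → Fin n → ℝ)
    (h : Fin n → Fin n → ℝ)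
    (m l b N sN : Fin n → ℝ)
    (B : Fin n → Fin p → ℝ)
    (L τ ν : ℝ) (hνpos : 0 < ν)
    (hsC : ∀ i j k, sC i j k
        = ν * Real.exp (2*τ) * C i j k
          + (2 / L) * Real.exp (2*τ) * m i * m j * m k
          + (1 / (2 * L)) * Real.exp (2*τ) * (2*ν - 1)
            * (m i * h k j + m j * h k i + m k * h i j))
    (hsN : ∀ k, sN k = N k / (Real.exp τ * Real.sqrt ν))
    (hm : ∀ i, m i = b i - τ * l i)
    (htang : ∑ j, b j * N j = 0)
    (hlN : ∑ j, l j * N j = 0)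
    (hhBN : ∀ α, ∑ k, ∑ j, h k j * B j α * N k = 0) :
    ∀ α β, ∑ i, ∑ j, ∑ k, sC i j k * B i α * B j β * sN k
      = Real.sqrt ν * Real.exp τ * ∑ i, ∑ j, ∑ k, C i j k * B i α * B j β * N k := by
  intro α β
  have hmN : m ⬝ᵥ N = 0 := by
    rw [show m = b - τ • l from funext hm, sub_dotProduct, smul_dotProduct]
    simp only [dotProduct, htang, hlN, smul_zero, sub_zero]
  have hhB : ∀ γ, N ⬝ᵥ of h *ᵥ (fun j => B j γ) = 0 := fun γ =>
    (dotProduct_mulVec_eq_sum _ _ _).trans (hhBN γ)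
  have hsN' : sN = (Real.exp τ * Real.sqrt ν)⁻¹ • N := funext fun k => by
    rw [hsN, Pi.smul_apply, smul_eq_mul, div_eq_inv_mul]
  have hscale : (Real.exp τ * Real.sqrt ν)⁻¹ * (ν * Real.exp (2 * τ))
      = Real.sqrt ν * Real.exp τ := by
    have hsqrt := Real.sq_sqrt hνpos.le
    have hsqrt_pos := Real.sqrt_pos.mpr hνpos
    rw [two_mul, Real.exp_add]
    field_simp
    linear_combination -hsqrt
  change contract3 sC _ _ sN = _ * contract3 C _ _ N
  rw [hsN', contract3_smul_right, contract3_eq_of_dotProduct_eq_zero C sC (of h) m _ _ N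
    (ν * Real.exp (2 * τ)) (2 / L * Real.exp (2 * τ))
    (1 / (2 * L) * Real.exp (2 * τ) * (2 * ν - 1))
    (fun i j k => by simp only [hsC, of_apply]; ring) hmN (hhB α) (hhB β),
    ← mul_assoc, hscale]

/-- Under the h-exponential change, the second fundamental v-tensors of the
hypersurfaces satisfy `*M_{αβ} = √ν e^τ M_{αβ}`, where `M_{αβ} = C_{ijk}B^i_αB^j_βN^k`,
`*M_{αβ} = *C_{ijk}B^i_αB^j_β *N^k`, and `b_jN^j = 0`. -/
theorem stmt_14 {n p : ℕ}
    (C sC : Fin n → Fin n → Fin n → ℝ)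
    (h : Fin n → Fin n → ℝ)
    (m l b N sN : Fin n → ℝ)
    (B : Fin n → Fin p → ℝ)
    (L τ ρ ν : ℝ) (hν : ν = 1 + ρ - τ) (hνpos : 0 < ν) (hL0 : L ≠ 0)
    (hsC : ∀ i j k, sC i j k
        = ν * Real.exp (2*τ) * C i j k
          + (2 / L) * Real.exp (2*τ) * m i * m j * m k
          + (1 / (2 * L)) * Real.exp (2*τ) * (2*ν - 1)
            * (m i * h k j + m j * h k i + m k * h i j))
    (hsN : ∀ k, sN k = N k / (Real.exp τ * Real.sqrt ν))
    (hm : ∀ i, m i = b i - τ * l i)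
    (htang : ∑ j, b j * N j = 0)
    (hlN : ∑ j, l j * N j = 0)
    (hhBN : ∀ α, ∑ k, ∑ j, h k j * B j α * N k = 0)
    (hhBN' : ∀ α, ∑ k, ∑ j, h j k * B j α * N k = 0) :
    ∀ α β, ∑ i, ∑ j, ∑ k, sC i j k * B i α * B j β * sN k
      = Real.sqrt ν * Real.exp τ * ∑ i, ∑ j, ∑ k, C i j k * B i α * B j β * N k :=
  stmt_14_general C sC h m l b N sN B L τ ν hνpos hsC hsN hm htang hlN hhBN
end
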